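/- First part of Proposition 3 (map to Painlevé V): Let I ⊂ (0, ∞) be an open interval, H0, H1 ∈ ℝ, and let y : I → ℝ be a smooth solution of equation (yeq) with constants H0, H1, satisfying y(x) ≠ 0 and y(x) + 2x ≠ 0 on I. Define p on the interval J = {x² : x ∈ I} by p(ξ) = 2√ξ / y(√ξ) + 1. Then p satisfies on J the Painlevé V equation p″ = (1/(2p) + 1/(p−1))(p′)² − p′/ξ + ((p−1)²/ξ²)(α p + β/p) + γ p/ξ + δ p(p+1)/(p−1), with parameters α = −H0/32, β = H1/32, γ = 1/2, δ = 0. -/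

import Mathlib

/-- The function `p(ξ) = 2√ξ / y(√ξ) + 1` of Proposition 3. -/
noncomputable def pFun (y : ℝ → ℝ) : ℝ → ℝ := fun ξ =>
  2 * Real.sqrt ξ / y (Real.sqrt ξ) + 1

/-- candidate for the derivative of `pFun y`. -/
noncomputable def gFun (y : ℝ → ℝ) : ℝ → ℝ := fun η =>
  (2 * y (Real.sqrt η) - 2 * Real.sqrt η * deriv y (Real.sqrt η)) /
    (y (Real.sqrt η)) ^ 2 / (2 * Real.sqrt η)

private lemma hasDerivAt_q (y : ℝ → ℝ) {x : ℝ} (hdy : DifferentiableAt ℝ y x)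
    (hu : y x ≠ 0) :
    HasDerivAt (fun t => 2 * t / y t + 1)
      ((2 * y x - 2 * x * deriv y x) / (y x) ^ 2) x := by
  have h1 : HasDerivAt (fun t : ℝ => 2 * t) 2 x := by
    simpa using (hasDerivAt_id x).const_mul 2
  have h2 := (h1.div hdy.hasDerivAt hu).add_const 1
  exact h2

private lemma hasDerivAt_pFun (y : ℝ → ℝ) {x : ℝ} (hx0 : 0 < x)
    (hdy : DifferentiableAt ℝ y x) (hu : y x ≠ 0) :
    HasDerivAt (pFun y)
      ((2 * y x - 2 * x * deriv y x) / (y x) ^ 2 / (2 * x)) (x ^ 2) := by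
  have hxsq : Real.sqrt (x ^ 2) = x := Real.sqrt_sq hx0.le
  have hs : HasDerivAt Real.sqrt (1 / (2 * Real.sqrt (x ^ 2))) (x ^ 2) :=
    Real.hasDerivAt_sqrt (by positivity)
  have hq : HasDerivAt (fun t => 2 * t / y t + 1)
      ((2 * y x - 2 * x * deriv y x) / (y x) ^ 2) (Real.sqrt (x ^ 2)) := by
    rw [hxsq]; exact hasDerivAt_q y hdy hu
  have h := hq.comp (x ^ 2) hs
  rw [hxsq] at h
  refine h.congr_deriv ?_
  ring

private lemma hasDerivAt_h (y : ℝ → ℝ) {x : ℝ} (hx0 : 0 < x)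
    (hdy : DifferentiableAt ℝ y x) (hdy' : DifferentiableAt ℝ (deriv y) x)
    (hu : y x ≠ 0) :
    HasDerivAt (fun t => (2 * y t - 2 * t * deriv y t) / (y t) ^ 2 / (2 * t))
      (((-2 * x * y x * deriv (deriv y) x - 4 * y x * deriv y x
          + 4 * x * (deriv y x) ^ 2) / (y x) ^ 3) / (2 * x)
        - ((2 * y x - 2 * x * deriv y x) / (y x) ^ 2) / (2 * x ^ 2)) x := by
  have h2t : HasDerivAt (fun t : ℝ => 2 * t) 2 x := by
    simpa using (hasDerivAt_id x).const_mul 2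
  have hN : HasDerivAt (fun t => 2 * y t - 2 * t * deriv y t)
      (2 * deriv y x - (2 * deriv y x + 2 * x * deriv (deriv y) x)) x := by
    have h := (hdy.hasDerivAt.const_mul 2).sub (h2t.mul hdy'.hasDerivAt)
    refine h.congr_deriv ?_
    ring
  have hD : HasDerivAt (fun t => (y t) ^ 2) (2 * y x * deriv y x) x := by
    have h := hdy.hasDerivAt.pow 2
    refine h.congr_deriv ?_
    ring
  have hQ := hN.div hD (pow_ne_zero 2 hu)
  have hfull := hQ.div h2t (by positivity : (2 : ℝ) * x ≠ 0)
  refine hfull.congr_deriv ?_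
  simp only [Pi.div_apply]
  field_simp
  ring

private lemma hasDerivAt_gFun (y : ℝ → ℝ) {x : ℝ} (hx0 : 0 < x)
    (hdy : DifferentiableAt ℝ y x) (hdy' : DifferentiableAt ℝ (deriv y) x)
    (hu : y x ≠ 0) :
    HasDerivAt (gFun y)
      (((((-2 * x * y x * deriv (deriv y) x - 4 * y x * deriv y x
          + 4 * x * (deriv y x) ^ 2) / (y x) ^ 3) / (2 * x)
        - ((2 * y x - 2 * x * deriv y x) / (y x) ^ 2) / (2 * x ^ 2))) / (2 * x))
      (x ^ 2) := by
  have hxsq : Real.sqrt (x ^ 2) = x := Real.sqrt_sq hx0.le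
  have hs : HasDerivAt Real.sqrt (1 / (2 * Real.sqrt (x ^ 2))) (x ^ 2) :=
    Real.hasDerivAt_sqrt (by positivity)
  have hh : HasDerivAt
      (fun t => (2 * y t - 2 * t * deriv y t) / (y t) ^ 2 / (2 * t))
      (((-2 * x * y x * deriv (deriv y) x - 4 * y x * deriv y x
          + 4 * x * (deriv y x) ^ 2) / (y x) ^ 3) / (2 * x)
        - ((2 * y x - 2 * x * deriv y x) / (y x) ^ 2) / (2 * x ^ 2))
      (Real.sqrt (x ^ 2)) := by
    rw [hxsq]; exact hasDerivAt_h y hx0 hdy hdy' hu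
  have h := hh.comp (x ^ 2) hs
  rw [hxsq] at h
  refine h.congr_deriv ?_
  ring

/-- First part of Proposition 3: the change of variables
`p(ξ) = 2x/y(x) + 1`, `ξ = x²` maps solutions of equation (yeq) into solutions
of the Painlevé V equation with `α = -H0/32`, `β = H1/32`, `γ = 1/2`, `δ = 0`. -/
theorem yeq_to_P5 (A B H0 H1 : ℝ) (hA : 0 < A) (y : ℝ → ℝ)
    (hy : ContDiffOn ℝ (⊤ : ℕ∞) y (Set.Ioo A B))
    (hy0 : ∀ x ∈ Set.Ioo A B, y x ≠ 0)
    (hy2x : ∀ x ∈ Set.Ioo A B, y x + 2 * x ≠ 0)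
    (hyeq : ∀ x ∈ Set.Ioo A B,
      deriv (deriv y) x =
        (y x + x) * ((deriv y x) ^ 2 + H0) / (y x * (y x + 2 * x))
        - y x * (deriv y x + (H1 - H0) / 4 + 1) / (x * (y x + 2 * x))
        - (y x / x) * (y x + 2 * x)) :
    ∀ ξ ∈ (fun x : ℝ => x ^ 2) '' Set.Ioo A B,
      deriv (deriv (pFun y)) ξ =
        (1 / (2 * pFun y ξ) + 1 / (pFun y ξ - 1)) * (deriv (pFun y) ξ) ^ 2
        - deriv (pFun y) ξ / ξ
        + ((pFun y ξ - 1) ^ 2 / ξ ^ 2)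
            * ((-H0 / 32) * pFun y ξ + (H1 / 32) / pFun y ξ)
        + (1 / 2) * pFun y ξ / ξ
        + 0 * (pFun y ξ * (pFun y ξ + 1) / (pFun y ξ - 1)) := by
  rintro ξ ⟨x, hx, rfl⟩
  obtain ⟨hAx, hxB⟩ := hx
  have hIoo : x ∈ Set.Ioo A B := ⟨hAx, hxB⟩
  have hx0 : 0 < x := hA.trans hAx
  have hB0 : 0 < B := hx0.trans hxB
  have hO : IsOpen (Set.Ioo A B) := isOpen_Ioo
  have hdiff : ∀ t ∈ Set.Ioo A B, DifferentiableAt ℝ y t := fun t ht =>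
    (hy.contDiffAt (hO.mem_nhds ht)).differentiableAt (by simp)
  have hy' : ContDiffOn ℝ (⊤ : ℕ∞) (deriv y) (Set.Ioo A B) := hy.deriv_of_isOpen hO (by simp)
  have hdiff' : ∀ t ∈ Set.Ioo A B, DifferentiableAt ℝ (deriv y) t := fun t ht =>
    (hy'.contDiffAt (hO.mem_nhds ht)).differentiableAt (by simp)
  have hmem : x ^ 2 ∈ Set.Ioo (A ^ 2) (B ^ 2) := ⟨by nlinarith, by nlinarith⟩
  have hev : deriv (pFun y) =ᶠ[nhds (x ^ 2)] gFun y := by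
    filter_upwards [isOpen_Ioo.mem_nhds hmem] with η hη
    have hη0 : 0 < η := lt_trans (by positivity) hη.1
    have hsIoo : Real.sqrt η ∈ Set.Ioo A B := by
      exact ⟨(Real.lt_sqrt hA.le).mpr hη.1, (Real.sqrt_lt' hB0).mpr hη.2⟩
    have hs0 : 0 < Real.sqrt η := Real.sqrt_pos.mpr hη0
    have h1 := hasDerivAt_pFun y hs0 (hdiff _ hsIoo) (hy0 _ hsIoo)
    rw [Real.sq_sqrt hη0.le] at h1
    exact h1.deriv
  have hg := hasDerivAt_gFun y hx0 (hdiff x hIoo) (hdiff' x hIoo) (hy0 x hIoo)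
  have hp1 : deriv (pFun y) (x ^ 2)
      = (2 * y x - 2 * x * deriv y x) / (y x) ^ 2 / (2 * x) :=
    (hasDerivAt_pFun y hx0 (hdiff x hIoo) (hy0 x hIoo)).deriv
  have hpv : pFun y (x ^ 2) = (2 * x + y x) / y x := by
    simp only [pFun, Real.sqrt_sq hx0.le]
    rw [div_add_one (hy0 x hIoo)]
  have hu : y x ≠ 0 := hy0 x hIoo
  have hu2 : 2 * x + y x ≠ 0 := by
    have := hy2x x hIoo; intro h; apply this; linarith
  have hxne : x ≠ 0 := hx0.ne'
  rw [hev.deriv_eq, hg.deriv, hp1, hpv, hyeq x hIoo]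
  have hpne : (2 * x + y x) / y x ≠ 0 := div_ne_zero hu2 hu
  have hpm : (2 * x + y x) / y x - 1 ≠ 0 := by
    rw [div_sub_one hu]
    simpa using div_ne_zero (by positivity : 2 * x ≠ 0) hu
  have hu2' : y x + 2 * x ≠ 0 := hy2x x hIoo
  field_simp
  ring
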